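/- Let 0 → A →f B →g C → 0 be a short exact sequence of complexes which is degreewise split, with R-linear sections σ : C^n → B^n satisfying g∘σ = id. Define ι′ : C^n → s(f)[1]^n = A^{n+1} ⊕ B^n by ι′(c) = (a_c, σ(c)), where a_c ∈ A^{n+1} is the unique element with f(a_c) = d(σ(c)) − σ(d c). Then ι′ : C → s(f)[1] is a morphism of complexes, the map π : s(f)[1] → C given by π(a,b) = g(b) satisfies π∘ι′ = Id_C, and ι′∘π is chain homotopic to the identity of s(f)[1], i.e., there exist R-linear maps H : s(f)[1]^n → s(f)[1]^{n-1} with ι′∘π − Id = d∘H + H∘d. -/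

import Mathlib

/-!
Since `f` is injective, identities in `A` can be checked after applying `f`; this makes `aσ`
linear and shows it anticommutes with the differentials. Exactness gives a retraction `τ` of `f`
with `f ∘ τ + σ ∘ g = id`, and `H(a, b) = (τ b, 0)` is a homotopy from `ι′ ∘ π` to the identity.
-/

noncomputable section

universe u v

/-- A cochain complex of `R`-modules indexed by `ℤ`, with differential of degree `+1`. -/
structure Cplx (R : Type u) [CommRing R] where
  /-- the degree `n` part -/
  X : ℤ → Type v
  [grp : ∀ n, AddCommGroup (X n)]
  [mod : ∀ n, Module R (X n)]
  /-- the differential -/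
  d : ∀ n, X n →ₗ[R] X (n + 1)
  dd : ∀ n x, d (n + 1) (d n x) = 0

attribute [instance] Cplx.grp Cplx.mod

variable {R : Type u} [CommRing R]

/-- Transport along an equality of degrees. -/
def Cplx.cE (A : Cplx R) : ∀ {i j : ℤ}, i = j → (A.X i →ₗ[R] A.X j)
  | _, _, rfl => LinearMap.id

/-- Morphisms of complexes, i.e. `R`-linear chain maps. -/
structure Hom (A B : Cplx R) where
  /-- the components -/
  f : ∀ n, A.X n →ₗ[R] B.X n
  comm : ∀ n x, f (n + 1) (A.d n x) = B.d n (f n x)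

def LinearMap.ofInjectiveComp {S M N P : Type*} [Semiring S] [AddCommMonoid M]
    [AddCommMonoid N] [AddCommMonoid P] [Module S M] [Module S N] [Module S P] (f : M →ₗ[S] N)
    (hf : Function.Injective f) (L : P →ₗ[S] N) (φ : P → M) (h : ∀ p, f (φ p) = L p) :
    P →ₗ[S] M where
  toFun := φ
  map_add' p q := hf (by simp only [map_add, h])
  map_smul' r p := hf (by simp only [map_smul, h, RingHom.id_apply])

section SplitExact

variable {A B C : Cplx R}

theorem Hom.comp_apply_eq_zero_of_exact {f : Hom A B} {g : Hom B C}
    (hexact : ∀ n, LinearMap.range (f.f n) = LinearMap.ker (g.f n)) (n : ℤ) (a : A.X n) :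
    g.f n (f.f n a) = 0 :=
  LinearMap.mem_ker.mp (hexact n ▸ LinearMap.mem_range_self (f.f n) a)

theorem Hom.exists_eq_sub_section {f : Hom A B} {g : Hom B C}
    (hexact : ∀ n, LinearMap.range (f.f n) = LinearMap.ker (g.f n))
    (σ : ∀ n, C.X n →ₗ[R] B.X n) (hσ : ∀ n c, g.f n (σ n c) = c) (n : ℤ) (b : B.X n) :
    ∃ a, f.f n a = b - σ n (g.f n b) := by
  rw [← LinearMap.mem_range, hexact, LinearMap.mem_ker, map_sub, hσ, sub_self]

def Hom.splitRetraction {f : Hom A B} {g : Hom B C} (hinj : ∀ n, Function.Injective (f.f n))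
    (hexact : ∀ n, LinearMap.range (f.f n) = LinearMap.ker (g.f n))
    (σ : ∀ n, C.X n →ₗ[R] B.X n) (hσ : ∀ n c, g.f n (σ n c) = c) (n : ℤ) :
    B.X n →ₗ[R] A.X n :=
  LinearMap.ofInjectiveComp (f.f n) (hinj n) (LinearMap.id - σ n ∘ₗ g.f n)
    (fun b => (Hom.exists_eq_sub_section hexact σ hσ n b).choose)
    (fun b => (Hom.exists_eq_sub_section hexact σ hσ n b).choose_spec)

theorem Hom.apply_splitRetraction {f : Hom A B} {g : Hom B C}
    (hinj : ∀ n, Function.Injective (f.f n))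
    (hexact : ∀ n, LinearMap.range (f.f n) = LinearMap.ker (g.f n))
    (σ : ∀ n, C.X n →ₗ[R] B.X n) (hσ : ∀ n c, g.f n (σ n c) = c) (n : ℤ) (b : B.X n) :
    f.f n (Hom.splitRetraction hinj hexact σ hσ n b) = b - σ n (g.f n b) :=
  (Hom.exists_eq_sub_section hexact σ hσ n b).choose_spec

variable (f : Hom A B) (σ : ∀ n, C.X n →ₗ[R] B.X n) (aσ : ∀ n, C.X n → A.X (n + 1))

theorem connecting_d_eq_neg (hinj : ∀ n, Function.Injective (f.f n))
    (haσ : ∀ n c, f.f (n + 1) (aσ n c) = B.d n (σ n c) - σ (n + 1) (C.d n c))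
    (n : ℤ) (c : C.X n) :
    aσ (n + 1) (C.d n c) = -(A.d (n + 1) (aσ n c)) := by
  apply hinj (n + 1 + 1)
  rw [map_neg, haσ, f.comm, haσ, map_sub, B.dd, C.dd, map_zero, sub_zero, zero_sub, neg_neg]

theorem connecting_sub_eq_homotopy (g : Hom B C) (τ : ∀ n, B.X n →ₗ[R] A.X n)
    (hinj : ∀ n, Function.Injective (f.f n)) (hgf : ∀ n a, g.f n (f.f n a) = 0)
    (hτ : ∀ n b, f.f n (τ n b) = b - σ n (g.f n b))
    (haσ : ∀ n c, f.f (n + 1) (aσ n c) = B.d n (σ n c) - σ (n + 1) (C.d n c))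
    (n : ℤ) (a : A.X (n + 1)) (b : B.X n) :
    aσ n (g.f n b) - a = -(A.d n (τ n b)) + τ (n + 1) (B.d n b - f.f (n + 1) a) := by
  apply hinj (n + 1)
  simp only [map_add, map_neg, map_sub, haσ, hτ, f.comm, g.comm, hgf, map_zero, sub_zero]
  abel

end SplitExact

/-- Let `0 → A → B → C → 0` be a degreewise split short exact sequence of
complexes, with sections `σ` of `g`.  Let `aσ n c` be the element of `A^{n+1}` determined by
`f(aσ n c) = d(σ c) - σ(d c)`.  Then `ι′(c) = (aσ c, σ c)` defines a morphism of complexes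
`C → s(f)[1]` (where `s(f)[1]^n = A^{n+1} ⊕ B^n` with differential
`d(a,b) = (-d a, d b - f a)`), it satisfies `π ∘ ι′ = Id` for `π(a,b) = g(b)`, and
`ι′ ∘ π` is chain homotopic to the identity of `s(f)[1]`. -/
theorem statement1 {A B C : Cplx R} (f : Hom A B) (g : Hom B C)
    (hinj : ∀ n, Function.Injective (f.f n))
    (hexact : ∀ n, LinearMap.range (f.f n) = LinearMap.ker (g.f n))
    (σ : ∀ n, C.X n →ₗ[R] B.X n)
    (hσ : ∀ n c, g.f n (σ n c) = c)
    (aσ : ∀ n, C.X n → A.X (n + 1))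
    (haσ : ∀ n c, f.f (n + 1) (aσ n c) = B.d n (σ n c) - σ (n + 1) (C.d n c)) :
    -- ι′ is a morphism of complexes: R-linearity ...
    (∀ n (c₁ c₂ : C.X n), aσ n (c₁ + c₂) = aσ n c₁ + aσ n c₂) ∧
    (∀ n (r : R) (c : C.X n), aσ n (r • c) = r • aσ n c) ∧
    -- ... and compatibility with the differentials
    (∀ n (c : C.X n), aσ (n + 1) (C.d n c) = -(A.d (n + 1) (aσ n c))) ∧
    (∀ n (c : C.X n), σ (n + 1) (C.d n c) = B.d n (σ n c) - f.f (n + 1) (aσ n c)) ∧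
    -- `π ∘ ι′ = Id`
    (∀ n (c : C.X n), g.f n (σ n c) = c) ∧
    -- `ι′ ∘ π` is homotopic to the identity
    (∃ (H₁ : ∀ n, (A.X (n + 1) × B.X n) →ₗ[R] A.X n)
       (H₂ : ∀ n, (A.X (n + 1) × B.X n) →ₗ[R] B.X (n - 1)),
      ∀ n (a : A.X (n + 1)) (b : B.X n),
        (aσ n (g.f n b) - a =
          -(A.d n (H₁ n (a, b))) +
            H₁ (n + 1) (-(A.d (n + 1) a), B.d n b - f.f (n + 1) a)) ∧
        (σ n (g.f n b) - b =
          B.cE (show n - 1 + 1 = n by omega) (B.d (n - 1) (H₂ n (a, b))) -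
            f.f n (H₁ n (a, b)) +
            B.cE (show n + 1 - 1 = n by omega)
              (H₂ (n + 1) (-(A.d (n + 1) a), B.d n b - f.f (n + 1) a)))) := by
  let ι : ∀ n, C.X n →ₗ[R] A.X (n + 1) := fun n =>
    LinearMap.ofInjectiveComp (f.f (n + 1)) (hinj (n + 1))
      (B.d n ∘ₗ σ n - σ (n + 1) ∘ₗ C.d n) (aσ n) (haσ n)
  refine ⟨fun n => map_add (ι n), fun n => map_smul (ι n), connecting_d_eq_neg f σ aσ hinj haσ,
    fun n c => by rw [haσ]; abel, hσ, ?_⟩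
  let τ := Hom.splitRetraction hinj hexact σ hσ
  refine ⟨fun n => τ n ∘ₗ LinearMap.snd R _ _, 0, fun n a b => ⟨?_, ?_⟩⟩
  · exact connecting_sub_eq_homotopy f σ aσ g τ hinj (Hom.comp_apply_eq_zero_of_exact hexact)
      (Hom.apply_splitRetraction hinj hexact σ hσ) haσ n a b
  · simp only [LinearMap.comp_apply, LinearMap.snd_apply, Pi.zero_apply, LinearMap.zero_apply,
      map_zero, Hom.apply_splitRetraction, τ]
    abel
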